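/- Let α ∈ [0,1) and let P, Q ∈ F₂ have quantile functions F⁻¹ and G⁻¹. Then the common trimming distance T_α(P,Q) := min_{h ∈ C_α} W₂(P_h, Q_h) equals zero if and only if ℓ({y ∈ (0,1) : F⁻¹(y) ≠ G⁻¹(y)}) ≤ α, where ℓ denotes Lebesgue measure. -/

import Mathlib

open MeasureTheory ProbabilityTheory Filter Topology Asymptotics
open scoped ENNReal NNReal

noncomputable section

/-- The (cumulative) distribution function of a Borel measure on `ℝ`. -/
def distFun (P : Measure ℝ) (x : ℝ) : ℝ := (P (Set.Iic x)).toReal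

/-- The quantile function (left-continuous generalized inverse of the distribution
function) of a Borel measure on `ℝ`. -/
def quant (P : Measure ℝ) (t : ℝ) : ℝ := sInf {x : ℝ | t ≤ distFun P x}

/-- The quadratic Wasserstein distance between two probabilities on the line,
expressed as the `L²` distance between quantile functions. -/
def W2 (P Q : Measure ℝ) : ℝ :=
  Real.sqrt (∫ t in Set.Ioo (0 : ℝ) 1, (quant P t - quant Q t) ^ 2)

/-- `W₂` distance between two sets of probabilities. -/
def W2Set (A B : Set (Measure ℝ)) : ℝ :=
  sInf {d : ℝ | ∃ R₁ ∈ A, ∃ R₂ ∈ B, d = W2 R₁ R₂}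

/-- `W₂` distance between a set of probabilities and a fixed probability. -/
def W2SetPt (A : Set (Measure ℝ)) (Q : Measure ℝ) : ℝ :=
  sInf {d : ℝ | ∃ R ∈ A, d = W2 R Q}

/-- The total variation distance `sup_B |P(B) - Q(B)|` over Borel sets `B`. -/
def dTV (P Q : Measure ℝ) : ℝ :=
  sSup {d : ℝ | ∃ B : Set ℝ, MeasurableSet B ∧ d = |(P B).toReal - (Q B).toReal|}

/-- The set of `α`-trimmed versions of `P`: probabilities `Q ≪ P` with
`dQ/dP ≤ 1/(1-α)` `P`-a.s. -/
def trimmings (α : ℝ) (P : Measure ℝ) : Set (Measure ℝ) :=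
  {Q | IsProbabilityMeasure Q ∧ Q ≪ P ∧
    ∀ᵐ x ∂P, Q.rnDeriv P x ≤ ENNReal.ofReal (1 / (1 - α))}

/-- The mixture `(1-ε)•P₀ + ε•P'`. -/
def mix (ε : ℝ) (P₀ P' : Measure ℝ) : Measure ℝ :=
  ENNReal.ofReal (1 - ε) • P₀ + ENNReal.ofReal ε • P'

/-- `P₁` and `P₂` are `α`-similar: both are contaminations (of size at most `α`)
of a common probability `P₀`. -/
def AlphaSimilar (α : ℝ) (P₁ P₂ : Measure ℝ) : Prop :=
  ∃ P₀ P₁' P₂' : Measure ℝ, ∃ ε₁ ε₂ : ℝ,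
    IsProbabilityMeasure P₀ ∧ IsProbabilityMeasure P₁' ∧ IsProbabilityMeasure P₂' ∧
    0 ≤ ε₁ ∧ ε₁ ≤ α ∧ 0 ≤ ε₂ ∧ ε₂ ≤ α ∧
    P₁ = mix ε₁ P₀ P₁' ∧ P₂ = mix ε₂ P₀ P₂'

/-- Membership in `F₂`: finite second moment. -/
def FiniteSecondMoment (P : Measure ℝ) : Prop :=
  ∫⁻ x, ENNReal.ofReal (x ^ 2) ∂P < ⊤

/-- Empirical measure of the first `n` variables of a sequence. -/
def empSeq {Ω : Type*} (X : ℕ → Ω → ℝ) (n : ℕ) (ω : Ω) : Measure ℝ :=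
  (n : ℝ≥0∞)⁻¹ • ∑ i ∈ Finset.range n, Measure.dirac (X i ω)

/-- Convergence in probability to a constant. -/
def TendstoInProb {Ω : Type*} [MeasurableSpace Ω] (Pr : Measure Ω)
    (f : ℕ → Ω → ℝ) (c : ℝ) : Prop :=
  ∀ ε > 0, Tendsto (fun n => Pr {ω | ε ≤ |f n ω - c|}) atTop (𝓝 0)

/-- `P` has density `f` (w.r.t. Lebesgue measure) which is bounded away from zero on
its support and has a bounded derivative (on the interior of the support). -/
structure NiceDensity (P : Measure ℝ) (f : ℝ → ℝ) : Prop where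
  nonneg : ∀ x, 0 ≤ f x
  meas : Measurable f
  eq : P = volume.withDensity fun x => ENNReal.ofReal (f x)
  pos : ∃ c > 0, ∀ x ∈ Function.support f, c ≤ f x
  diff : DifferentiableOn ℝ f (interior (Function.support f))
  bddDeriv : ∃ M, ∀ x ∈ interior (Function.support f), |deriv f x| ≤ M

/-- Empirical measure of the coordinates of a vector indexed by a finset. -/
def empVec {N : ℕ} (v : Fin N → ℝ) (s : Finset (Fin N)) : Measure ℝ :=
  (s.card : ℝ≥0∞)⁻¹ • ∑ i ∈ s, Measure.dirac (v i)

/-- The bootstrap p-value: the probability, under `R^{⊗(n'+m')}`, that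
`√(n'm'/(n'+m')) W₂(P*_{n'}, Q*_{m'})` exceeds the threshold `c`, where `P*_{n'}` and
`Q*_{m'}` are the empirical measures of the first `n'` and last `m'` coordinates. -/
def bootPval (R : Measure ℝ) (n' m' : ℕ) (c : ℝ) : ℝ :=
  ((Measure.pi fun _ : Fin (n' + m') => R)
    {v | c < Real.sqrt ((n' * m' : ℝ) / (n' + m')) *
      W2 (empVec v (Finset.univ.filter fun i => (i : ℕ) < n'))
         (empVec v (Finset.univ.filter fun i => n' ≤ (i : ℕ)))}).toReal


/-- `h` belongs to `C_α`, with (a.e.) derivative `h'`: `h` is absolutely continuous on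
`[0,1]` (it is the integral of `h'`), `h 0 = 0`, `h 1 = 1` and `0 ≤ h' ≤ 1/(1-α)`
almost everywhere on `[0,1]`. -/
def IsTrimmingFun (α : ℝ) (h h' : ℝ → ℝ) : Prop :=
  Measurable h' ∧
  (∀ᵐ y ∂(volume.restrict (Set.Icc (0 : ℝ) 1)), 0 ≤ h' y ∧ h' y ≤ 1 / (1 - α)) ∧
  (∀ x ∈ Set.Icc (0 : ℝ) 1, h x = ∫ y in Set.Ioc (0 : ℝ) x, h' y) ∧
  h 1 = 1

/-- Generalized inverse of a function on `[0,1]`. -/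
def funInv (h : ℝ → ℝ) (t : ℝ) : ℝ := sInf {x | x ∈ Set.Icc (0 : ℝ) 1 ∧ t ≤ h x}

/-!
For `h ∈ C_α` let `ν_h` (`trimMeasure h'`) be the measure on `(0,1]` with density `h'`: a
probability whose distribution function is `h` on `[0,1]` and which is at most `λ/(1-α)`.
The distribution function of `P_h` is that of `ν_h` composed with `F`, so the Galois connection
between a distribution function and its quantile function gives `P_h⁻¹ = F⁻¹ ∘ ν_h⁻¹` on
`(0,1)`; as a quantile function pushes `λ` on `(0,1)` forward to its law,
`W₂(P_h, Q_h)² = ∫ (F⁻¹ - G⁻¹)² dν_h`, which is finite by the second moments. Hence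
`W₂(P_h, Q_h) = 0` iff `ν_h` does not charge `D = {F⁻¹ ≠ G⁻¹}`. A probability of density at
most `1/(1-α)` needs Lebesgue measure at least `1-α` off `D`, so this forces `ℓ(D) ≤ α`;
conversely, if `ℓ(D) ≤ α` the uniform density on `(0,1] \ D` gives a suitable `h`, with `P_h`
realised as the image of `ν_h` under `F⁻¹`.
-/

open Set

lemma distFun_eq_cdf (R : Measure ℝ) [IsProbabilityMeasure R] : distFun R = cdf R :=
  funext fun x => (cdf_eq_real R x).symm

lemma distFun_mem_Icc (R : Measure ℝ) [IsProbabilityMeasure R] (x : ℝ) :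
    distFun R x ∈ Icc 0 1 := by
  rw [distFun_eq_cdf]
  exact ⟨cdf_nonneg R x, cdf_le_one R x⟩

section Quantile

variable (R : Measure ℝ) [IsProbabilityMeasure R] {t : ℝ}

lemma quant_le_iff (ht : t ∈ Ioo 0 1) (x : ℝ) : quant R t ≤ x ↔ t ≤ distFun R x := by
  rw [quant, distFun_eq_cdf]
  have hne : {x | t ≤ cdf R x}.Nonempty :=
    (((tendsto_cdf_atTop R).eventually_const_lt ht.2).mono fun _ => le_of_lt).exists
  have hbdd : BddBelow {x | t ≤ cdf R x} := by
    obtain ⟨y, hy⟩ := ((tendsto_cdf_atBot R).eventually_lt_const ht.1).exists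
    exact ⟨y, fun z hz => le_of_not_gt fun hzy => (hz.trans (monotone_cdf R hzy.le)).not_gt hy⟩
  refine ⟨fun hx => ?_, fun hx => csInf_le hbdd hx⟩
  have hright : ∀ u ∈ Ioi x, t ≤ cdf R u := fun u hu => by
    obtain ⟨z, hz, hzu⟩ := exists_lt_of_csInf_lt hne (hx.trans_lt hu)
    exact hz.trans (monotone_cdf R hzu.le)
  exact ge_of_tendsto (((cdf R).right_continuous x).mono Ioi_subset_Ici_self)
    (eventually_nhdsWithin_of_forall hright)

lemma monotoneOn_quant : MonotoneOn (quant R) (Ioo 0 1) := fun _ hs _ ht hst =>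
  (quant_le_iff R hs _).2 (hst.trans ((quant_le_iff R ht _).1 le_rfl))

lemma aemeasurable_quant : AEMeasurable (quant R) (volume.restrict (Ioo 0 1)) :=
  aemeasurable_restrict_of_monotoneOn measurableSet_Ioo (monotoneOn_quant R)

lemma map_quant_apply_Iic {ν : Measure ℝ} (hν : ν ≪ volume.restrict (Ioo 0 1)) (x : ℝ) :
    ν.map (quant R) (Iic x) = ν (Iic (distFun R x)) := by
  rw [Measure.map_apply_of_aemeasurable ((aemeasurable_quant R).mono_ac hν) measurableSet_Iic]
  refine measure_congr ?_
  filter_upwards [hν.ae_le (ae_restrict_mem measurableSet_Ioo)] with t ht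
  exact propext (quant_le_iff R ht x)

lemma distFun_map_quant {ν : Measure ℝ}
    (hν : ν ≪ volume.restrict (Ioo 0 1)) (x : ℝ) :
    distFun (ν.map (quant R)) x = distFun ν (distFun R x) :=
  congrArg ENNReal.toReal (map_quant_apply_Iic R hν x)

lemma volume_restrict_Ioo_Iic (y : ℝ) :
    volume.restrict (Ioo (0 : ℝ) 1) (Iic y) = ENNReal.ofReal (min 1 y) := by
  rw [Measure.restrict_congr_set Ioo_ae_eq_Ioc, Measure.restrict_apply measurableSet_Iic,
    inter_comm, Ioc_inter_Iic, Real.volume_Ioc, sub_zero]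

lemma map_quant : (volume.restrict (Ioo 0 1)).map (quant R) = R := by
  refine Measure.ext_of_Iic _ _ fun x => ?_
  rw [map_quant_apply_Iic R (Measure.AbsolutelyContinuous.refl _), volume_restrict_Ioo_Iic,
    min_eq_right (distFun_mem_Icc R x).2, distFun, ENNReal.ofReal_toReal (measure_ne_top R _)]

lemma lintegral_sq_quant_lt_top (hR : FiniteSecondMoment R) :
    ∫⁻ t in Ioo 0 1, ENNReal.ofReal (quant R t ^ 2) < ⊤ := by
  rw [← lintegral_map' (f := fun x => ENNReal.ofReal (x ^ 2)) (by fun_prop) (aemeasurable_quant R),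
    map_quant]
  exact hR

end Quantile

lemma quant_eq_quant_quant (R : Measure ℝ) {ν Rh : Measure ℝ} [IsProbabilityMeasure ν] {t : ℝ}
    (hRh : ∀ x, distFun Rh x = distFun ν (distFun R x)) (ht : t ∈ Ioo 0 1) :
    quant Rh t = quant R (quant ν t) := by
  have hset : {x | t ≤ distFun Rh x} = {x | quant ν t ≤ distFun R x} := by
    ext x
    rw [mem_ofPred_eq, mem_ofPred_eq, hRh, quant_le_iff ν ht]
  rw [quant, hset]
  rfl

lemma lintegral_sq_quant_sub_lt_top (P Q : Measure ℝ) [IsProbabilityMeasure P]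
    [IsProbabilityMeasure Q] (hP : FiniteSecondMoment P) (hQ : FiniteSecondMoment Q) :
    ∫⁻ t in Ioo 0 1, ENNReal.ofReal ((quant P t - quant Q t) ^ 2) < ⊤ := by
  have hsq : ∀ a b : ℝ, ENNReal.ofReal ((a - b) ^ 2) ≤
      2 * ENNReal.ofReal (a ^ 2) + 2 * ENNReal.ofReal (b ^ 2) := fun a b => by
    rw [← ENNReal.ofReal_ofNat 2, ← ENNReal.ofReal_mul zero_le_two,
      ← ENNReal.ofReal_mul zero_le_two, ← ENNReal.ofReal_add (by positivity) (by positivity)]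
    exact ENNReal.ofReal_le_ofReal (by nlinarith [sq_nonneg (a + b)])
  calc _ ≤ ∫⁻ t in Ioo 0 1,
        (2 * ENNReal.ofReal (quant P t ^ 2) + 2 * ENNReal.ofReal (quant Q t ^ 2)) :=
        lintegral_mono fun t => hsq _ _
    _ = 2 * (∫⁻ t in Ioo 0 1, ENNReal.ofReal (quant P t ^ 2)) +
          2 * ∫⁻ t in Ioo 0 1, ENNReal.ofReal (quant Q t ^ 2) := by
        rw [lintegral_add_left' (((aemeasurable_quant P).pow_const 2).ennreal_ofReal.const_mul 2),
          lintegral_const_mul' _ _ ENNReal.ofNat_ne_top,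
          lintegral_const_mul' _ _ ENNReal.ofNat_ne_top]
    _ < ⊤ := ENNReal.add_lt_top.2
        ⟨ENNReal.mul_lt_top ENNReal.ofNat_lt_top (lintegral_sq_quant_lt_top P hP),
          ENNReal.mul_lt_top ENNReal.ofNat_lt_top (lintegral_sq_quant_lt_top Q hQ)⟩

section TrimmedQuantiles

variable {ν P Q Ph Qh : Measure ℝ} [IsProbabilityMeasure P] [IsProbabilityMeasure Q]

lemma aemeasurable_sq_quant_sub (hν : ν ≪ volume.restrict (Ioo 0 1)) :
    AEMeasurable (fun y => ENNReal.ofReal ((quant P y - quant Q y) ^ 2)) ν :=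
  (((aemeasurable_quant P).sub (aemeasurable_quant Q)).pow_const 2).ennreal_ofReal.mono_ac hν

lemma lintegral_sq_quant_sub_of_distFun_eq [IsProbabilityMeasure ν]
    (hν : ν ≪ volume.restrict (Ioo 0 1))
    (hPh : ∀ x, distFun Ph x = distFun ν (distFun P x))
    (hQh : ∀ x, distFun Qh x = distFun ν (distFun Q x)) :
    ∫⁻ t in Ioo 0 1, ENNReal.ofReal ((quant Ph t - quant Qh t) ^ 2) =
      ∫⁻ y, ENNReal.ofReal ((quant P y - quant Q y) ^ 2) ∂ν := by
  set g : ℝ → ℝ≥0∞ := fun y => ENNReal.ofReal ((quant P y - quant Q y) ^ 2)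
  calc _ = ∫⁻ t in Ioo 0 1, g (quant ν t) :=
        setLIntegral_congr_fun measurableSet_Ioo fun t ht => by
          rw [quant_eq_quant_quant P hPh ht, quant_eq_quant_quant Q hQh ht]
    _ = ∫⁻ y, g y ∂ν := by
        rw [← lintegral_map' (by rw [map_quant]; exact aemeasurable_sq_quant_sub hν)
          (aemeasurable_quant ν), map_quant]

lemma W2_eq_zero_iff_ae_quant_eq [IsProbabilityMeasure ν] [IsProbabilityMeasure Ph]
    [IsProbabilityMeasure Qh]
    (hν : ν ≪ volume.restrict (Ioo 0 1))
    (hPh : ∀ x, distFun Ph x = distFun ν (distFun P x))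
    (hQh : ∀ x, distFun Qh x = distFun ν (distFun Q x))
    (hfin : ∫⁻ y, ENNReal.ofReal ((quant P y - quant Q y) ^ 2) ∂ν ≠ ⊤) :
    W2 Ph Qh = 0 ↔ ∀ᵐ y ∂ν, quant P y = quant Q y := by
  have hint : ∫ t in Ioo 0 1, (quant Ph t - quant Qh t) ^ 2 =
      (∫⁻ y, ENNReal.ofReal ((quant P y - quant Q y) ^ 2) ∂ν).toReal := by
    rw [integral_eq_lintegral_of_nonneg_ae (f := fun t => (quant Ph t - quant Qh t) ^ 2)
      (ae_of_all _ fun t => sq_nonneg _)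
      (((aemeasurable_quant Ph).sub (aemeasurable_quant Qh)).pow_const 2).aestronglyMeasurable,
      lintegral_sq_quant_sub_of_distFun_eq hν hPh hQh]
  rw [W2, hint, Real.sqrt_eq_zero ENNReal.toReal_nonneg, ENNReal.toReal_eq_zero_iff,
    or_iff_left hfin, lintegral_eq_zero_iff' (aemeasurable_sq_quant_sub hν)]
  refine Filter.eventually_congr (ae_of_all _ fun y => ?_)
  simp [sub_eq_zero]

end TrimmedQuantiles

instance : IsProbabilityMeasure (volume.restrict (Ioc (0 : ℝ) 1)) :=
  ⟨by rw [Measure.restrict_apply_univ, Real.volume_Ioc, sub_zero, ENNReal.ofReal_one]⟩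

def trimMeasure (h' : ℝ → ℝ) : Measure ℝ :=
  (volume.restrict (Ioc 0 1)).withDensity fun y => ENNReal.ofReal (h' y)

lemma trimMeasure_absolutelyContinuous (h' : ℝ → ℝ) :
    trimMeasure h' ≪ volume.restrict (Ioo 0 1) := by
  rw [Measure.restrict_congr_set Ioo_ae_eq_Ioc]
  exact withDensity_absolutelyContinuous _ _

namespace IsTrimmingFun

variable {α : ℝ} {h h' : ℝ → ℝ}

lemma integrableOn (hh : IsTrimmingFun α h h') : IntegrableOn h' (Icc 0 1) :=
  Measure.integrableOn_of_bounded (M := 1 / (1 - α)) (by simp) hh.1.aestronglyMeasurable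
    (hh.2.1.mono fun y hy => by rw [Real.norm_eq_abs, abs_of_nonneg hy.1]; exact hy.2)

lemma nonneg (hh : IsTrimmingFun α h h') {y : ℝ} (hy : y ∈ Icc 0 1) : 0 ≤ h y := by
  rw [hh.2.2.1 y hy]
  exact integral_nonneg_of_ae <| ae_restrict_of_ae_restrict_of_subset
    (Ioc_subset_Icc_self.trans (Icc_subset_Icc_right hy.2)) (hh.2.1.mono fun _ hz => hz.1)

lemma ofReal_eq_setLIntegral (hh : IsTrimmingFun α h h') {y : ℝ} (hy : y ∈ Icc 0 1) :
    ENNReal.ofReal (h y) = ∫⁻ z in Ioc 0 y, ENNReal.ofReal (h' z) := by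
  have hsub : Ioc 0 y ⊆ Icc (0 : ℝ) 1 := Ioc_subset_Icc_self.trans (Icc_subset_Icc_right hy.2)
  rw [hh.2.2.1 y hy, ofReal_integral_eq_lintegral_ofReal (hh.integrableOn.mono_set hsub)
    (ae_restrict_of_ae_restrict_of_subset hsub (hh.2.1.mono fun _ hz => hz.1))]

lemma trimMeasure_Iic (hh : IsTrimmingFun α h h') {y : ℝ} (hy : y ∈ Icc 0 1) :
    trimMeasure h' (Iic y) = ENNReal.ofReal (h y) := by
  rw [trimMeasure, withDensity_apply _ measurableSet_Iic,
    Measure.restrict_restrict measurableSet_Iic, Iic_inter_Ioc_of_le hy.2,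
    hh.ofReal_eq_setLIntegral hy]

lemma isProbabilityMeasure_trimMeasure (hh : IsTrimmingFun α h h') :
    IsProbabilityMeasure (trimMeasure h') := by
  refine ⟨?_⟩
  rw [trimMeasure, withDensity_apply _ MeasurableSet.univ, Measure.restrict_univ,
    ← hh.ofReal_eq_setLIntegral ⟨zero_le_one, le_rfl⟩, hh.2.2.2, ENNReal.ofReal_one]

lemma distFun_trimMeasure (hh : IsTrimmingFun α h h') {y : ℝ} (hy : y ∈ Icc 0 1) :
    distFun (trimMeasure h') y = h y := by
  rw [distFun, hh.trimMeasure_Iic hy, ENNReal.toReal_ofReal (hh.nonneg hy)]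

lemma trimMeasure_le (hh : IsTrimmingFun α h h') :
    trimMeasure h' ≤ ENNReal.ofReal (1 / (1 - α)) • volume.restrict (Ioc 0 1) := by
  rw [trimMeasure, ← withDensity_const]
  exact withDensity_mono <| (ae_restrict_of_ae_restrict_of_subset Ioc_subset_Icc_self hh.2.1).mono
    fun _ hy => ENNReal.ofReal_le_ofReal hy.2

lemma measure_le_of_trimMeasure_eq_zero (hα1 : α < 1) (hh : IsTrimmingFun α h h') {E : Set ℝ}
    (hE : trimMeasure h' E = 0) : volume.restrict (Ioc 0 1) E ≤ ENNReal.ofReal α := by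
  have := hh.isProbabilityMeasure_trimMeasure
  set T := toMeasurable (trimMeasure h') E
  have hT : MeasurableSet T := measurableSet_toMeasurable _ _
  set r := (volume.restrict (Ioc (0 : ℝ) 1) T).toReal
  have hr : volume.restrict (Ioc (0 : ℝ) 1) T = ENNReal.ofReal r :=
    (ENNReal.ofReal_toReal (measure_ne_top _ _)).symm
  have hr0 : 0 ≤ r := ENNReal.toReal_nonneg
  have hC : 0 < 1 / (1 - α) := one_div_pos.2 (sub_pos.2 hα1)
  -- the whole mass of `trimMeasure h'` sits on `Tᶜ`, where its density is at most `1/(1-α)`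
  have hone : 1 ≤ ENNReal.ofReal (1 / (1 - α) * (1 - r)) := calc
    1 = trimMeasure h' Tᶜ := by rw [prob_compl_eq_one_sub hT, measure_toMeasurable, hE, tsub_zero]
    _ ≤ (ENNReal.ofReal (1 / (1 - α)) • volume.restrict (Ioc 0 1)) Tᶜ := hh.trimMeasure_le _
    _ = _ := by
      rw [Measure.smul_apply, prob_compl_eq_one_sub hT, smul_eq_mul, hr, ← ENNReal.ofReal_one,
        ← ENNReal.ofReal_sub _ hr0, ← ENNReal.ofReal_mul hC.le]
  rw [ENNReal.one_le_ofReal, div_mul_eq_mul_div, one_mul, le_div_iff₀ (sub_pos.2 hα1)] at hone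
  calc volume.restrict (Ioc 0 1) E ≤ volume.restrict (Ioc 0 1) T :=
        measure_mono (subset_toMeasurable _ _)
    _ ≤ ENNReal.ofReal α := by rw [hr]; exact ENNReal.ofReal_le_ofReal (by linarith)

lemma distFun_map_quant (hh : IsTrimmingFun α h h') (R : Measure ℝ) [IsProbabilityMeasure R]
    (x : ℝ) : distFun ((trimMeasure h').map (quant R)) x = h (distFun R x) :=
  (_root_.distFun_map_quant R (trimMeasure_absolutelyContinuous h') x).trans
    (hh.distFun_trimMeasure (distFun_mem_Icc R x))

lemma W2_eq_zero_iff (hh : IsTrimmingFun α h h') {P Q Ph Qh : Measure ℝ}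
    [IsProbabilityMeasure P] [IsProbabilityMeasure Q] [IsProbabilityMeasure Ph]
    [IsProbabilityMeasure Qh] (hP : FiniteSecondMoment P) (hQ : FiniteSecondMoment Q)
    (hPh : ∀ x, distFun Ph x = h (distFun P x)) (hQh : ∀ x, distFun Qh x = h (distFun Q x)) :
    W2 Ph Qh = 0 ↔ trimMeasure h' {y | quant P y ≠ quant Q y} = 0 := by
  have := hh.isProbabilityMeasure_trimMeasure
  have hfin : ∫⁻ y, ENNReal.ofReal ((quant P y - quant Q y) ^ 2) ∂trimMeasure h' ≠ ⊤ := by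
    refine ne_top_of_le_ne_top ?_ (lintegral_mono' hh.trimMeasure_le le_rfl)
    rw [lintegral_smul_measure, ← Measure.restrict_congr_set Ioo_ae_eq_Ioc]
    exact ENNReal.mul_ne_top ENNReal.ofReal_ne_top (lintegral_sq_quant_sub_lt_top P Q hP hQ).ne
  rw [W2_eq_zero_iff_ae_quant_eq (trimMeasure_absolutelyContinuous h')
    (fun x => (hPh x).trans (hh.distFun_trimMeasure (distFun_mem_Icc P x)).symm)
    (fun x => (hQh x).trans (hh.distFun_trimMeasure (distFun_mem_Icc Q x)).symm) hfin, ae_iff]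

end IsTrimmingFun

lemma exists_isTrimmingFun_trimMeasure_eq_zero {α : ℝ} (hα0 : 0 ≤ α) (hα1 : α < 1) {E : Set ℝ}
    (hE : volume.restrict (Ioc 0 1) E ≤ ENNReal.ofReal α) :
    ∃ h h' : ℝ → ℝ, IsTrimmingFun α h h' ∧ trimMeasure h' E = 0 := by
  set T := toMeasurable (volume.restrict (Ioc (0 : ℝ) 1)) E
  have hT : MeasurableSet T := measurableSet_toMeasurable _ _
  set r := (volume.restrict (Ioc (0 : ℝ) 1) T).toReal
  have hrα : r ≤ α := ENNReal.toReal_le_of_le_ofReal hα0 (by rwa [measure_toMeasurable])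
  have hc : 0 < 1 / (1 - r) := one_div_pos.2 (by linarith)
  set h' : ℝ → ℝ := Tᶜ.indicator fun _ => 1 / (1 - r)
  refine ⟨fun x => ∫ y in Ioc 0 x, h' y, h', ⟨measurable_const.indicator hT.compl,
    ae_of_all _ fun y => ⟨indicator_nonneg (fun _ _ => hc.le) y, ?_⟩, fun _ _ => rfl, ?_⟩, ?_⟩
  · exact (indicator_le_self' fun _ _ => hc.le) y |>.trans
      (one_div_le_one_div_of_le (by linarith) (by linarith))
  · change ∫ y in Ioc 0 1, h' y = 1
    rw [integral_indicator_const _ hT.compl, measureReal_def, prob_compl_eq_one_sub hT,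
      ENNReal.toReal_sub_of_le prob_le_one ENNReal.one_ne_top, ENNReal.toReal_one, smul_eq_mul,
      mul_one_div_cancel (by linarith)]
  · refine measure_mono_null (show E ⊆ T from subset_toMeasurable _ _) ?_
    rw [trimMeasure, withDensity_apply _ hT]
    refine (setLIntegral_congr_fun hT fun y hy => ?_).trans lintegral_zero
    simp [h', hy]

/-- The common trimming distance `T_α(P,Q) = min_{h ∈ C_α} W₂(P_h,Q_h)`
vanishes (i.e. the minimum is attained at value `0`) iff the set of `y ∈ (0,1)` where the
quantile functions of `P` and `Q` differ has Lebesgue measure at most `α`. -/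
theorem common_trimming_distance_eq_zero_iff
    (α : ℝ) (hα0 : 0 ≤ α) (hα1 : α < 1)
    (P Q : Measure ℝ) (hP : IsProbabilityMeasure P) (hQ : IsProbabilityMeasure Q)
    (hmP : FiniteSecondMoment P) (hmQ : FiniteSecondMoment Q) :
    (∃ h h' : ℝ → ℝ, IsTrimmingFun α h h' ∧
      ∃ Ph Qh : Measure ℝ, IsProbabilityMeasure Ph ∧ IsProbabilityMeasure Qh ∧
        (∀ x, distFun Ph x = h (distFun P x)) ∧
        (∀ x, distFun Qh x = h (distFun Q x)) ∧
        W2 Ph Qh = 0) ↔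
    volume {y ∈ Set.Ioo (0 : ℝ) 1 | quant P y ≠ quant Q y} ≤ ENNReal.ofReal α := by
  have hvol : volume {y ∈ Ioo (0 : ℝ) 1 | quant P y ≠ quant Q y} =
      volume.restrict (Ioc 0 1) {y | quant P y ≠ quant Q y} := by
    rw [← Measure.restrict_congr_set Ioo_ae_eq_Ioc, Measure.restrict_apply' measurableSet_Ioo,
      inter_comm]
    rfl
  rw [hvol]
  constructor
  · rintro ⟨h, h', hh, Ph, Qh, _, _, hPh, hQh, hW⟩
    exact hh.measure_le_of_trimMeasure_eq_zero hα1 ((hh.W2_eq_zero_iff hmP hmQ hPh hQh).1 hW)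
  · intro hD
    obtain ⟨h, h', hh, hE⟩ := exists_isTrimmingFun_trimMeasure_eq_zero hα0 hα1 hD
    have := hh.isProbabilityMeasure_trimMeasure
    have : IsProbabilityMeasure ((trimMeasure h').map (quant P)) :=
      Measure.isProbabilityMeasure_map
        ((aemeasurable_quant P).mono_ac (trimMeasure_absolutelyContinuous h'))
    have : IsProbabilityMeasure ((trimMeasure h').map (quant Q)) :=
      Measure.isProbabilityMeasure_map
        ((aemeasurable_quant Q).mono_ac (trimMeasure_absolutelyContinuous h'))
    exact ⟨h, h', hh, _, _, inferInstance, inferInstance, hh.distFun_map_quant P,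
      hh.distFun_map_quant Q,
      (hh.W2_eq_zero_iff hmP hmQ (hh.distFun_map_quant P) (hh.distFun_map_quant Q)).2 hE⟩

end
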